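/- Fix d ≥ 2, 0 < p⋆ ≤ 1/(2(d+1)), and η₁, η₂ ∈ Δ_d, and let P₁, P₂ be the laws of a length-m trajectory under (M_{η₁}, p) and (M_{η₂}, p) respectively. Let N_{d+1}(x) = ∑_{t=1}^m 1{x_t = d+1}. Then for every n ∈ ℕ with m + 1 ≥ 2n, the total variation distance between the conditional distributions of the trajectory given N_{d+1} ≤ n satisfies: TV( P₁(· | N_{d+1} ≤ n), P₂(· | N_{d+1} ≤ n) ) ≤ TV( P₁(· | N_{d+1} = n), P₂(· | N_{d+1} = n) ). -/

import Mathlib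

open Finset

noncomputable section

/-- A row-stochastic matrix. -/
def IsStochastic {d : ℕ} (M : Matrix (Fin d) (Fin d) ℝ) : Prop :=
  (∀ i j, 0 ≤ M i j) ∧ ∀ i, ∑ j, M i j = 1

/-- A probability distribution on `Fin d`. -/
def IsDist {d : ℕ} (μ : Fin d → ℝ) : Prop :=
  (∀ i, 0 ≤ μ i) ∧ ∑ i, μ i = 1

/-- Probability of a length-`m` trajectory under the Markov chain `(M, μ)`:
`μ(x₁) ∏_{t=1}^{m-1} M(x_t, x_{t+1})`. -/
def trajP {d m : ℕ} (M : Matrix (Fin d) (Fin d) ℝ) (μ : Fin d → ℝ)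
    (x : Fin m → Fin d) : ℝ :=
  (if h : 0 < m then μ (x ⟨0, h⟩) else 1) *
    ∏ t : Fin (m - 1),
      M (x ⟨t.1, by have h2 := t.2; omega⟩) (x ⟨t.1 + 1, by have h2 := t.2; omega⟩)


/-- The distribution `p` on `[d+1]`: `p(d+1) = p⋆`, `p(i) = (1-p⋆)/d` for `i ∈ [d]`. -/
def pInit (d : ℕ) (ps : ℝ) : Fin (d + 1) → ℝ :=
  fun i => if i.1 = d then ps else (1 - ps) / d

/-- The chain `M_η ∈ G_{p⋆}`: rows `1,…,d` equal `p`, row `d+1` is `(η(1),…,η(d),0)`. -/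
def MG (d : ℕ) (ps : ℝ) (η : Fin d → ℝ) : Matrix (Fin (d + 1)) (Fin (d + 1)) ℝ :=
  Matrix.of fun i j =>
    if i.1 = d then (if h : j.1 = d then 0 else η ⟨j.1, by have h2 := j.2; omega⟩)
    else pInit d ps j

/-- Number of visits to state `d+1` in a trajectory. -/
def Nlast (d m : ℕ) (x : Fin m → Fin (d + 1)) : ℕ :=
  (Finset.univ.filter (fun t => (x t).1 = d)).card

open scoped Classical in
/-- The conditional distribution of a length-`m` trajectory of `(M_η, p)` given the
event `E` (with the convention `0/0 = 0`). -/
def condP {d m : ℕ} (ps : ℝ) (η : Fin d → ℝ)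
    (E : (Fin m → Fin (d + 1)) → Prop) (x : Fin m → Fin (d + 1)) : ℝ :=
  (if E x then trajP (MG d ps η) (pInit d ps) x else 0) /
    ∑ y, if E y then trajP (MG d ps η) (pInit d ps) y else 0

/-- Total variation distance between two distributions on a finite set. -/
def tvDist {S : Type*} [Fintype S] (P Q : S → ℝ) : ℝ := (1 / 2) * ∑ x, |P x - Q x|

/-- The `n`-fold product distribution `η^{⊗n}` on `[d]^n`. -/
def prodP {d : ℕ} (η : Fin d → ℝ) (n : ℕ) (x : Fin n → Fin d) : ℝ := ∏ s, η (x s)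

/-! Under `M_η` only the transitions out of `d+1` depend on `η`, and each of them is a fresh draw
from `η` on `[d]`. So the number `r` of visits to `d+1` and the number `j` of draws have a joint
law that does not depend on `η`, and given them the draws are i.i.d. `η`. The total variation
distance between the laws conditioned on `N_{d+1} = r` is therefore an average of
`TV(η₁^{⊗j}, η₂^{⊗j})` over `j ∈ {r - 1, r}` (`j = r - 1` when the trajectory ends at `d+1`).
These distances increase with `j`, so each `r < n` gives at most `TV(η₁^{⊗(n-1)}, η₂^{⊗(n-1)})`
while `r = n` gives at least that; conditioning on `N_{d+1} ≤ n` averages the values for `r ≤ n`,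
which is thus at most the value for `r = n`. The event `N_{d+1} = n` has positive probability
because `2n ≤ m + 1` and `0 < p⋆ < 1`. -/

lemma sum_fun_fin_succ {α β : Type*} [Fintype α] [AddCommMonoid β] {k : ℕ}
    (F : (Fin (k + 1) → α) → β) : ∑ y, F y = ∑ b, ∑ z : Fin k → α, F (Fin.cons b z) := by
  rw [← Fintype.sum_prod_type']
  exact (Fintype.sum_equiv (Fin.consEquiv fun _ => α) _ _ fun _ => rfl).symm

lemma tvDist_ite_div {S : Type*} [Fintype S] (P Q : S → ℝ) (E : S → Prop) [DecidablePred E]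
    (hQ : ∑ x, (if E x then Q x else 0) = ∑ x, if E x then P x else 0)
    (hP : 0 ≤ ∑ x, if E x then P x else 0) :
    tvDist (fun x => (if E x then P x else 0) / ∑ y, if E y then P y else 0)
        (fun x => (if E x then Q x else 0) / ∑ y, if E y then Q y else 0) =
      (∑ x, if E x then |P x - Q x| else 0) / (2 * ∑ x, if E x then P x else 0) := by
  have habs : ∀ x, |(if E x then P x else 0) - if E x then Q x else 0| =
      if E x then |P x - Q x| else 0 := fun x => by split_ifs <;> simp
  rw [hQ, tvDist]
  simp only [← sub_div, abs_div, abs_of_nonneg hP, ← Finset.sum_div, habs]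
  ring

lemma sum_div_sum_le_div {ι : Type*} {s : Finset ι} {i₀ : ι} (hi₀ : i₀ ∈ s) {D Z : ι → ℝ} {c : ℝ}
    (hZ : ∀ i ∈ s, 0 ≤ Z i) (hZ₀ : 0 < Z i₀) (hD : ∀ i ∈ s, i ≠ i₀ → D i ≤ Z i * c)
    (hD₀ : Z i₀ * c ≤ D i₀) :
    (∑ i ∈ s, D i) / ∑ i ∈ s, Z i ≤ D i₀ / Z i₀ := by
  have hsum : 0 < ∑ i ∈ s, Z i := Finset.sum_pos' hZ ⟨i₀, hi₀, hZ₀⟩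
  rw [div_le_div_iff₀ hsum hZ₀, Finset.sum_mul, Finset.mul_sum]
  refine Finset.sum_le_sum fun i hi => ?_
  rcases eq_or_ne i i₀ with rfl | hne
  · rw [mul_comm]
  · nlinarith [mul_nonneg (sub_nonneg.2 (hD i hi hne)) hZ₀.le,
      mul_nonneg (sub_nonneg.2 hD₀) (hZ i hi)]

section Trajectory

variable {S : ℕ} (M : Matrix (Fin S) (Fin S) ℝ) (μ : Fin S → ℝ)

lemma trajP_succ {k : ℕ} (x : Fin (k + 1) → Fin S) :
    trajP M μ x = μ (x 0) * ∏ t : Fin k, M (x t.castSucc) (x t.succ) := by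
  rw [trajP, dif_pos k.succ_pos]
  rfl

lemma trajP_cons {k : ℕ} (b : Fin S) (z : Fin k → Fin S) :
    trajP M μ (Fin.cons b z : Fin (k + 1) → Fin S) = μ b * trajP M (M b) z := by
  rcases k with _ | k
  · simp [trajP]
  · simp [trajP_succ, Fin.prod_univ_succ]

end Trajectory

section ProductMeasure

variable {d : ℕ} (η η₁ η₂ : Fin d → ℝ)

lemma prodP_cons {j : ℕ} (b : Fin d) (u : Fin j → Fin d) :
    prodP η (j + 1) (Fin.cons b u) = η b * prodP η j u := by
  simp [prodP, Fin.prod_univ_succ]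

lemma sum_prodP (hη : ∑ i, η i = 1) (j : ℕ) : ∑ u, prodP η j u = 1 := by
  simp [prodP, ← Fintype.sum_pow, hη]

lemma tvDist_prodP_mono (h₁ : ∑ i, η₁ i = 1) (h₂ : ∑ i, η₂ i = 1) :
    Monotone fun j => tvDist (prodP η₁ j) (prodP η₂ j) := by
  refine monotone_nat_of_le_succ fun j => ?_
  simp only [tvDist, sum_fun_fin_succ (k := j), prodP_cons]
  rw [Finset.sum_comm]
  gcongr with u
  calc |prodP η₁ j u - prodP η₂ j u|
      = |∑ b, (η₁ b * prodP η₁ j u - η₂ b * prodP η₂ j u)| := by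
        rw [Finset.sum_sub_distrib, ← Finset.sum_mul, ← Finset.sum_mul, h₁, h₂, one_mul, one_mul]
    _ ≤ _ := Finset.abs_sum_le_sum_abs _ _

end ProductMeasure

section Chain

variable {d : ℕ} {ps : ℝ} {η : Fin d → ℝ}

lemma pInit_last : pInit d ps (Fin.last d) = ps := by
  simp [pInit]

lemma pInit_castSucc (i : Fin d) : pInit d ps i.castSucc = (1 - ps) / d := by
  simp [pInit, i.is_lt.ne]

lemma pInit_nonneg (hps0 : 0 ≤ ps) (hps1 : ps ≤ 1) (b : Fin (d + 1)) : 0 ≤ pInit d ps b := by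
  unfold pInit
  split_ifs
  exacts [hps0, div_nonneg (by linarith) d.cast_nonneg]

lemma MG_last_castSucc (i : Fin d) : MG d ps η (Fin.last d) i.castSucc = η i := by
  simp [MG, i.is_lt.ne]

lemma MG_last_last : MG d ps η (Fin.last d) (Fin.last d) = 0 := by
  simp [MG]

lemma MG_of_ne_last {a : Fin (d + 1)} (ha : a ≠ Fin.last d) : MG d ps η a = pInit d ps := by
  have ha' : a.1 ≠ d := fun h => ha (Fin.ext h)
  ext b
  simp [MG, ha']

lemma Nlast_cons {k : ℕ} (b : Fin (d + 1)) (z : Fin k → Fin (d + 1)) :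
    Nlast d (k + 1) (Fin.cons b z) = Nlast d k z + if b = Fin.last d then 1 else 0 := by
  rw [Nlast, Nlast, Finset.card_filter, Finset.card_filter, Fin.sum_univ_succ]
  simp [Fin.ext_iff, add_comm]

lemma Nlast_le {m : ℕ} (x : Fin m → Fin (d + 1)) : Nlast d m x ≤ m :=
  (Finset.card_filter_le _ _).trans (by simp)

lemma pInit_eq_MG (i : Fin d) : pInit d ps = MG d ps η i.castSucc :=
  (MG_of_ne_last i.castSucc_ne_last).symm

end Chain

/-- `visitWeight ps last k r j` is the probability that `k` steps of `M_η`, started at `d+1` if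
`last` and at a state of `[d]` otherwise, visit `d+1` exactly `r` times and make exactly `j`
transitions out of `d+1`. It does not depend on `η`. -/
def visitWeight (ps : ℝ) : Bool → ℕ → ℕ → ℕ → ℝ
  | _, 0, r, j => if r = 0 ∧ j = 0 then 1 else 0
  | true, _ + 1, _, 0 => 0
  | true, k + 1, r, j + 1 => visitWeight ps false k r j
  | false, k + 1, 0, j => (1 - ps) * visitWeight ps false k 0 j
  | false, k + 1, r + 1, j =>
      (1 - ps) * visitWeight ps false k (r + 1) j + ps * visitWeight ps true k r j

section VisitWeight

variable {ps : ℝ} {f : ℕ → ℝ}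

lemma visitWeight_nonneg (hps0 : 0 ≤ ps) (hps1 : ps ≤ 1) (last : Bool) (k r j : ℕ) :
    0 ≤ visitWeight ps last k r j := by
  fun_induction visitWeight ps last k r j <;> positivity

lemma visitWeight_eq_zero_of_lt {last : Bool} {k r j : ℕ} (hkj : k < j) :
    visitWeight ps last k r j = 0 := by
  fun_induction visitWeight ps last k r j <;> grind

lemma sum_range_succ_visitWeight (last : Bool) (k r : ℕ) (f : ℕ → ℝ) :
    ∑ j ∈ range (k + 2), visitWeight ps last k r j * f j =
      ∑ j ∈ range (k + 1), visitWeight ps last k r j * f j := by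
  rw [Finset.sum_range_succ, visitWeight_eq_zero_of_lt (by omega), zero_mul, add_zero]

lemma visitWeight_ne_zero {last : Bool} {k r j : ℕ} (h : visitWeight ps last k r j ≠ 0) :
    j ≤ r + last.toNat ∧ r + last.toNat ≤ j + 1 := by
  fun_induction visitWeight ps last k r j <;> grind [Bool.toNat_le]

lemma exists_visitWeight_pos (hps0 : 0 < ps) (hps1 : ps < 1) {last : Bool} {k r : ℕ}
    (h : 2 * r + last.toNat ≤ k + 1) : ∃ j, 0 < visitWeight ps last k r j := by
  induction k generalizing last r with
  | zero =>
    obtain rfl : r = 0 := by cases last <;> simp at h <;> omega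
    exact ⟨0, by simp [visitWeight]⟩
  | succ k ih =>
    rcases last with _ | _
    · rcases r with _ | r
      · obtain ⟨j, hj⟩ := ih (last := false) (r := 0) (by simp)
        exact ⟨j, mul_pos (by linarith) hj⟩
      · obtain ⟨j, hj⟩ := ih (last := true) (r := r) (by simp at h ⊢; omega)
        exact ⟨j, add_pos_of_nonneg_of_pos
          (mul_nonneg (by linarith) (visitWeight_nonneg hps0.le hps1.le _ _ _ _)) (mul_pos hps0 hj)⟩
    · obtain ⟨j, hj⟩ := ih (last := false) (r := r) (by simp at h ⊢; omega)
      exact ⟨j + 1, hj⟩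

lemma sum_visitWeight_mul_le (hps0 : 0 ≤ ps) (hps1 : ps ≤ 1) (hf : Monotone f) (m r : ℕ) :
    ∑ j ∈ range (m + 1), visitWeight ps false m r j * f j ≤
      (∑ j ∈ range (m + 1), visitWeight ps false m r j) * f r := by
  rw [Finset.sum_mul]
  refine Finset.sum_le_sum fun j _ => ?_
  rcases eq_or_ne (visitWeight ps false m r j) 0 with h | h
  · simp [h]
  · exact mul_le_mul_of_nonneg_left (hf (by simpa using (visitWeight_ne_zero h).1))
      (visitWeight_nonneg hps0 hps1 _ _ _ _)

lemma sum_visitWeight_mul_ge (hps0 : 0 ≤ ps) (hps1 : ps ≤ 1) (hf : Monotone f) (m r : ℕ) :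
    (∑ j ∈ range (m + 1), visitWeight ps false m r j) * f (r - 1) ≤
      ∑ j ∈ range (m + 1), visitWeight ps false m r j * f j := by
  rw [Finset.sum_mul]
  refine Finset.sum_le_sum fun j _ => ?_
  rcases eq_or_ne (visitWeight ps false m r j) 0 with h | h
  · simp [h]
  · refine mul_le_mul_of_nonneg_left (hf ?_) (visitWeight_nonneg hps0 hps1 _ _ _ _)
    have hrj := (visitWeight_ne_zero h).2
    simp only [Bool.toNat_false, add_zero] at hrj
    omega

lemma sum_visitWeight_pos (hps0 : 0 < ps) (hps1 : ps < 1) {m r : ℕ} (h : 2 * r ≤ m + 1) :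
    0 < ∑ j ∈ range (m + 1), visitWeight ps false m r j := by
  obtain ⟨j, hj⟩ := exists_visitWeight_pos hps0 hps1 (last := false) (by simpa using h)
  have hjr := (visitWeight_ne_zero hj.ne').1
  simp only [Bool.toNat_false, add_zero] at hjr
  exact Finset.sum_pos' (fun j _ => visitWeight_nonneg hps0.le hps1.le _ _ _ _)
    ⟨j, Finset.mem_range.2 (by omega), hj⟩

end VisitWeight

section Decomposition

variable {d : ℕ} (ps : ℝ) (η₁ η₂ : Fin d → ℝ)

def trajPairSum (Φ : ℝ → ℝ → ℝ) (a : Fin (d + 1)) (k : ℕ) (c : ℕ → Prop) [DecidablePred c] :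
    ℝ :=
  ∑ y : Fin k → Fin (d + 1), if c (Nlast d k y) then
    Φ (trajP (MG d ps η₁) (MG d ps η₁ a) y) (trajP (MG d ps η₂) (MG d ps η₂ a) y) else 0

variable {ps η₁ η₂} {Φ : ℝ → ℝ → ℝ} (c : ℕ → Prop) [DecidablePred c]

lemma trajPairSum_zero (a : Fin (d + 1)) :
    trajPairSum ps η₁ η₂ Φ a 0 c = if c 0 then Φ 1 1 else 0 := by
  simp [trajPairSum, Nlast, trajP]

lemma trajPairSum_succ_last (hΦ : Φ 0 0 = 0) (k : ℕ) :
    trajPairSum ps η₁ η₂ Φ (Fin.last d) (k + 1) c =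
      ∑ i, trajPairSum ps η₁ η₂ (fun x y => Φ (η₁ i * x) (η₂ i * y)) i.castSucc k c := by
  simp [trajPairSum, sum_fun_fin_succ, trajP_cons, Nlast_cons, Fin.sum_univ_castSucc,
    MG_last_last, MG_last_castSucc, hΦ, Fin.castSucc_ne_last]

lemma trajPairSum_succ_of_ne_last (hps0 : 0 ≤ ps) (hps1 : ps ≤ 1)
    (hΦ : ∀ l x y, 0 ≤ l → Φ (l * x) (l * y) = l * Φ x y) {a : Fin (d + 1)}
    (ha : a ≠ Fin.last d) (k : ℕ) :
    trajPairSum ps η₁ η₂ Φ a (k + 1) c =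
      (1 - ps) / d * ∑ i : Fin d, trajPairSum ps η₁ η₂ Φ i.castSucc k c +
        ps * trajPairSum ps η₁ η₂ Φ (Fin.last d) k fun r => c (r + 1) := by
  have hscale : ∀ b x y, Φ (pInit d ps b * x) (pInit d ps b * y) = pInit d ps b * Φ x y :=
    fun b x y => hΦ _ x y (pInit_nonneg hps0 hps1 b)
  simp only [trajPairSum, sum_fun_fin_succ, trajP_cons, Nlast_cons, Fin.sum_univ_castSucc,
    MG_of_ne_last ha, hscale]
  simp [pInit_castSucc, pInit_last, Fin.castSucc_ne_last, Finset.mul_sum]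

/-- The identity is proved for every positively homogeneous `Φ` because a step out of `d+1`
multiplies the two weights by `η₁ i` and `η₂ i`, which the induction absorbs into `Φ`. -/
theorem trajPairSum_eq (hd : 0 < d) (hps0 : 0 ≤ ps) (hps1 : ps ≤ 1)
    (hΦ : ∀ l x y, 0 ≤ l → Φ (l * x) (l * y) = l * Φ x y) (k : ℕ) (a : Fin (d + 1)) (r : ℕ) :
    trajPairSum ps η₁ η₂ Φ a k (· = r) =
      ∑ j ∈ range (k + 1), visitWeight ps (a = Fin.last d) k r j *
        ∑ u, Φ (prodP η₁ j u) (prodP η₂ j u) := by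
  induction k generalizing Φ a r with
  | zero => simp [trajPairSum_zero, visitWeight, prodP, eq_comm]
  | succ k ih =>
    by_cases ha : a = Fin.last d
    · subst ha
      have hi : ∀ i : Fin d, trajPairSum ps η₁ η₂ (fun x y => Φ (η₁ i * x) (η₂ i * y))
          i.castSucc k (· = r) = ∑ j ∈ range (k + 1), visitWeight ps false k r j *
            ∑ u, Φ (η₁ i * prodP η₁ j u) (η₂ i * prodP η₂ j u) := fun i => by
        simpa [Fin.castSucc_ne_last] using
          ih (fun l x y hl => by simpa only [mul_left_comm] using hΦ l _ _ hl) i.castSucc r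
      rw [trajPairSum_succ_last _ (by simpa using hΦ 0 0 0 le_rfl)]
      simp only [hi]
      rw [Finset.sum_comm]
      conv_rhs => rw [Finset.sum_range_succ']
      simp only [decide_true, visitWeight, zero_mul, add_zero, ← Finset.mul_sum]
      refine Finset.sum_congr rfl fun j _ => ?_
      rw [sum_fun_fin_succ (fun u => Φ (prodP η₁ (j + 1) u) (prodP η₂ (j + 1) u))]
      simp only [prodP_cons]
    · rw [trajPairSum_succ_of_ne_last _ hps0 hps1 hΦ ha]
      simp only [ih hΦ, Fin.castSucc_ne_last, decide_false, ha, Finset.sum_const,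
        Finset.card_univ, Fintype.card_fin, nsmul_eq_mul]
      rw [← mul_assoc, div_mul_cancel₀ _ (Nat.cast_ne_zero.mpr hd.ne' : (d : ℝ) ≠ 0)]
      rcases r with _ | r
      · simp [trajPairSum, visitWeight, mul_assoc, ← Finset.mul_sum, sum_range_succ_visitWeight]
      · simp only [Nat.add_right_cancel_iff, ih hΦ, visitWeight, decide_true, add_mul,
          mul_assoc, Finset.sum_add_distrib, ← Finset.mul_sum, sum_range_succ_visitWeight]

end Decomposition

section Conditioning

variable {d m : ℕ} {ps : ℝ} {η η₁ η₂ : Fin d → ℝ}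

lemma condP_eq (E : (Fin m → Fin (d + 1)) → Prop) [DecidablePred E] :
    condP ps η E = fun x => (if E x then trajP (MG d ps η) (pInit d ps) x else 0) /
      ∑ y, if E y then trajP (MG d ps η) (pInit d ps) y else 0 := by
  unfold condP
  congr!

lemma sum_ite_comp_Nlast (c : ℕ → Prop) [DecidablePred c] (f : (Fin m → Fin (d + 1)) → ℝ) :
    ∑ x, (if c (Nlast d m x) then f x else 0) =
      ∑ r ∈ (range (m + 1)).filter c, ∑ x, if Nlast d m x = r then f x else 0 := by
  rw [Finset.sum_comm]
  refine Finset.sum_congr rfl fun x _ => ?_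
  rw [Finset.sum_ite_eq]
  simp [Nat.lt_succ_of_le (Nlast_le x)]

theorem sum_ite_Nlast_trajP (hd : 0 < d) (hps0 : 0 ≤ ps) (hps1 : ps ≤ 1) (hη : ∑ i, η i = 1)
    (m r : ℕ) :
    ∑ x : Fin m → Fin (d + 1), (if Nlast d m x = r then trajP (MG d ps η) (pInit d ps) x else 0) =
      ∑ j ∈ range (m + 1), visitWeight ps false m r j := by
  have h := trajPairSum_eq (η₁ := η) (η₂ := η) (Φ := fun x _ => x) hd hps0 hps1
    (fun _ _ _ _ => rfl) m (⟨0, hd⟩ : Fin d).castSucc r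
  simpa only [trajPairSum, ← pInit_eq_MG, Fin.castSucc_ne_last, decide_false, sum_prodP η hη,
    mul_one] using h

theorem sum_ite_Nlast_abs_sub (hd : 0 < d) (hps0 : 0 ≤ ps) (hps1 : ps ≤ 1) (m r : ℕ) :
    ∑ x : Fin m → Fin (d + 1), (if Nlast d m x = r then
        |trajP (MG d ps η₁) (pInit d ps) x - trajP (MG d ps η₂) (pInit d ps) x| else 0) =
      2 * ∑ j ∈ range (m + 1), visitWeight ps false m r j * tvDist (prodP η₁ j) (prodP η₂ j) := by
  have h := trajPairSum_eq (η₁ := η₁) (η₂ := η₂) (Φ := fun x y => |x - y|) hd hps0 hps1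
    (fun l x y hl => by rw [← mul_sub, abs_mul, abs_of_nonneg hl]) m (⟨0, hd⟩ : Fin d).castSucc r
  simp only [trajPairSum, ← pInit_eq_MG, Fin.castSucc_ne_last, decide_false] at h
  rw [h, Finset.mul_sum]
  refine Finset.sum_congr rfl fun j _ => ?_
  rw [tvDist]
  ring

theorem tvDist_condP_Nlast (hd : 0 < d) (hps0 : 0 ≤ ps) (hps1 : ps ≤ 1) (h₁ : ∑ i, η₁ i = 1)
    (h₂ : ∑ i, η₂ i = 1) (m : ℕ) (c : ℕ → Prop) [DecidablePred c] :
    tvDist (condP (m := m) ps η₁ fun x => c (Nlast d m x))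
        (condP (m := m) ps η₂ fun x => c (Nlast d m x)) =
      (∑ r ∈ (range (m + 1)).filter c, ∑ j ∈ range (m + 1),
          visitWeight ps false m r j * tvDist (prodP η₁ j) (prodP η₂ j)) /
        ∑ r ∈ (range (m + 1)).filter c, ∑ j ∈ range (m + 1), visitWeight ps false m r j := by
  rw [condP_eq, condP_eq, tvDist_ite_div]
  · simp only [sum_ite_comp_Nlast c, sum_ite_Nlast_abs_sub hd hps0 hps1,
      sum_ite_Nlast_trajP hd hps0 hps1 h₁, ← Finset.mul_sum]
    exact mul_div_mul_left _ _ two_ne_zero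
  · simp only [sum_ite_comp_Nlast c, sum_ite_Nlast_trajP hd hps0 hps1 h₁,
      sum_ite_Nlast_trajP hd hps0 hps1 h₂]
  · rw [sum_ite_comp_Nlast c]
    simp only [sum_ite_Nlast_trajP hd hps0 hps1 h₁]
    exact Finset.sum_nonneg fun r _ => Finset.sum_nonneg fun j _ =>
      visitWeight_nonneg hps0 hps1 _ _ _ _

end Conditioning

/-- Conditioning on `N_{d+1} ≤ n` is controlled by conditioning on `N_{d+1} = n`:
the TV distance between the conditional trajectory laws given `N_{d+1} ≤ n` is at
most that given `N_{d+1} = n`. -/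
theorem tv_cond_le_of_cond_eq
    (d m : ℕ) (hd : 2 ≤ d) (ps : ℝ) (hps : 0 < ps) (hps2 : ps ≤ 1 / (2 * ((d : ℝ) + 1)))
    (η₁ η₂ : Fin d → ℝ) (h1 : IsDist η₁) (h2 : IsDist η₂)
    (n : ℕ) (hn : 2 * n ≤ m + 1) :
    tvDist (condP (m := m) ps η₁ (fun x => Nlast d m x ≤ n))
        (condP (m := m) ps η₂ (fun x => Nlast d m x ≤ n)) ≤
      tvDist (condP (m := m) ps η₁ (fun x => Nlast d m x = n))
        (condP (m := m) ps η₂ (fun x => Nlast d m x = n)) := by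
  have hd0 : 0 < d := by omega
  have hps1 : ps < 1 := hps2.trans_lt <| (div_lt_one (by positivity)).2 (by linarith)
  have hmono := tvDist_prodP_mono η₁ η₂ h1.2 h2.2
  rw [tvDist_condP_Nlast hd0 hps.le hps1.le h1.2 h2.2 m (· ≤ n),
    tvDist_condP_Nlast hd0 hps.le hps1.le h1.2 h2.2 m (· = n), Finset.filter_eq',
    if_pos (Finset.mem_range.2 (by omega)), Finset.sum_singleton, Finset.sum_singleton]
  apply sum_div_sum_le_div (i₀ := n)
  · exact Finset.mem_filter.2 ⟨Finset.mem_range.2 (by omega), le_rfl⟩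
  · exact fun r _ => Finset.sum_nonneg fun j _ => visitWeight_nonneg hps.le hps1.le _ _ _ _
  · exact sum_visitWeight_pos hps hps1 hn
  · intro r hr hrn
    have hr' : r ≤ n - 1 := by have := (Finset.mem_filter.1 hr).2; omega
    exact (sum_visitWeight_mul_le hps.le hps1.le hmono m r).trans (mul_le_mul_of_nonneg_left
      (hmono hr') (Finset.sum_nonneg fun j _ => visitWeight_nonneg hps.le hps1.le _ _ _ _))
  · exact sum_visitWeight_mul_ge hps.le hps1.le hmono m n

end
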